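/- Let m, n ≥ 1 be natural numbers. Then the quantities K satisfy the recurrence (n+1)·K(m,n) − (m+1)·K(n,m) = (n−1)·K(m−1,n−1) − (m−1)·K(n−1,m−1), where K(m,n) = Σ_{r=0}^{m+n} S(m,n,r)/(r+2)² and S(m,n,r) is the coefficient of x^{r+1} in the polynomial p_m(x)·q_{n+1}(x), with q_{n+1}(x) = ∫₀ˣ p_n(t) dt. -/

import Mathlib

open Polynomial

/-- The shifted Legendre polynomial `pₙ(x) = (1/n!) dⁿ/dxⁿ (xⁿ(x-1)ⁿ)`, as a polynomial. -/
noncomputable def shiftedLegendrePoly (n : ℕ) : Polynomial ℝ :=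
  C ((Nat.factorial n : ℝ))⁻¹ * (derivative^[n] (X ^ n * (X - 1) ^ n))

/-- The integrated shifted Legendre polynomial `q_{n+1}(x) = ∫₀ˣ pₙ(t) dt`. -/
noncomputable def qPoly (n : ℕ) : Polynomial ℝ :=
  ∑ k ∈ Finset.range (n + 1), C ((shiftedLegendrePoly n).coeff k / ((k : ℝ) + 1)) * X ^ (k + 1)

/-- `S m n r` is the coefficient of `x^(r+1)` in `p_m(x) * q_{n+1}(x)`. -/
noncomputable def S (m n r : ℕ) : ℝ := (shiftedLegendrePoly m * qPoly n).coeff (r + 1)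


/-- `K m n = ∑_{r=0}^{m+n} S(m,n,r)/(r+2)²`. -/
noncomputable def K (m n : ℕ) : ℝ := ∑ r ∈ Finset.range (m + n + 1), S m n r / ((r : ℝ) + 2) ^ 2

/-!
Two relations express `q_{n+1}` through neighbouring Legendre polynomials:
`2 (n + 1) q_{n+1} = (2x - 1) p_n - p_{n-1}` and `2 n q_{n+1} = p_{n+1} - (2x - 1) p_n`.
Substituting the first into `(n + 1) p_m q_{n+1} - (m + 1) p_n q_{m+1}` and the second into
`(n - 1) p_{m-1} q_n - (m - 1) p_{n-1} q_m` turns both into `(p_n p_{m-1} - p_m p_{n-1}) / 2`,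
and `K m n` is a fixed linear functional of `p_m q_{n+1}`. The two relations are checked
coefficientwise, from contiguous relations between the coefficients
`(-1)^(n+k) C(n,k) C(n+k,n)` of `p_n`.
-/

open Finset

theorem Nat.choose_add_add_one_mul (n k : ℕ) :
    (n + k + 1).choose n * (k + 1) = (n + k).choose n * (n + k + 1) := by
  have := Nat.choose_mul_succ_eq (n + k) n
  rw [show n + k + 1 - n = k + 1 by omega] at this
  exact this.symm

theorem shiftedLegendrePoly_eq_map (n : ℕ) :
    shiftedLegendrePoly n = C ((-1) ^ n) * (shiftedLegendre n).map (Int.castRingHom ℝ) := by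
  have hX : (X ^ n * (X - 1) ^ n : ℝ[X]) =
      C ((-1) ^ n) * (X ^ n * (1 - X) ^ n : ℤ[X]).map (Int.castRingHom ℝ) := by
    simp only [Polynomial.map_mul, Polynomial.map_pow, Polynomial.map_sub, map_X,
      Polynomial.map_one, C_pow, C_neg, C_1]
    rw [← neg_sub, neg_pow]; ring
  have hfact : (n.factorial : ℝ) ≠ 0 := by positivity
  rw [shiftedLegendrePoly, hX, iterate_derivative_C_mul, iterate_derivative_map,
    ← factorial_mul_shiftedLegendre_eq, Polynomial.map_mul, Polynomial.map_natCast,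
    ← C_eq_natCast, ← mul_assoc, ← mul_assoc, ← C_mul, ← C_mul]
  field_simp

theorem coeff_shiftedLegendrePoly (n k : ℕ) :
    (shiftedLegendrePoly n).coeff k = (-1) ^ (n + k) * n.choose k * (n + k).choose n := by
  rw [shiftedLegendrePoly_eq_map, coeff_C_mul, coeff_map, coeff_shiftedLegendre, eq_intCast]
  push_cast
  ring

theorem coeff_shiftedLegendrePoly_of_lt {n k : ℕ} (h : n < k) :
    (shiftedLegendrePoly n).coeff k = 0 := by
  simp [coeff_shiftedLegendrePoly, Nat.choose_eq_zero_of_lt h]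

theorem natDegree_shiftedLegendrePoly_le (n : ℕ) : (shiftedLegendrePoly n).natDegree ≤ n :=
  natDegree_le_iff_coeff_eq_zero.2 fun _ hk =>
    coeff_shiftedLegendrePoly_of_lt (by exact_mod_cast hk)

theorem sq_mul_coeff_succ_shiftedLegendrePoly (n k : ℕ) :
    ((k : ℝ) + 1) ^ 2 * (shiftedLegendrePoly n).coeff (k + 1) =
      -((n : ℝ) - k) * (n + k + 1) * (shiftedLegendrePoly n).coeff k := by
  have h₁ : (n.choose (k + 1) : ℝ) * (k + 1) = n.choose k * ((n : ℝ) - k) := by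
    rcases le_or_gt k n with hkn | hnk
    · have := congrArg (Nat.cast (R := ℝ)) (Nat.choose_succ_right_eq n k)
      push_cast [hkn] at this
      exact this
    · simp [Nat.choose_eq_zero_of_lt hnk, Nat.choose_eq_zero_of_lt (hnk.trans k.lt_succ_self)]
  have h₂ : ((n + k + 1).choose n : ℝ) * (k + 1) = (n + k).choose n * (n + k + 1) := by
    exact_mod_cast Nat.choose_add_add_one_mul n k
  rw [coeff_shiftedLegendrePoly, coeff_shiftedLegendrePoly, ← add_assoc]
  linear_combination (-(-1 : ℝ) ^ (n + k)) *
    ((k + 1) * ((n + k + 1).choose n : ℝ) * h₁ + n.choose k * ((n : ℝ) - k) * h₂)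

theorem sq_mul_coeff_succ_shiftedLegendrePoly_succ (n k : ℕ) :
    ((k : ℝ) + 1) ^ 2 * (shiftedLegendrePoly (n + 1)).coeff (k + 1) =
      (n + k + 1) * (n + k + 2) * (shiftedLegendrePoly n).coeff k := by
  have h₁ : ((n : ℝ) + 1) * n.choose k = (n + 1).choose (k + 1) * (k + 1) := by
    exact_mod_cast Nat.add_one_mul_choose_eq n k
  have h₂ : ((n : ℝ) + k + 2) * (n + k + 1).choose n =
      (n + k + 2).choose (n + 1) * (n + 1) := by
    exact_mod_cast Nat.add_one_mul_choose_eq (n + k + 1) n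
  have h₃ : ((n + k + 1).choose n : ℝ) * (k + 1) = (n + k).choose n * (n + k + 1) := by
    exact_mod_cast Nat.choose_add_add_one_mul n k
  refine mul_left_cancel₀ (show (n : ℝ) + 1 ≠ 0 by positivity) ?_
  rw [coeff_shiftedLegendrePoly, coeff_shiftedLegendrePoly,
    show n + 1 + (k + 1) = n + k + 2 by ring]
  linear_combination (-1 : ℝ) ^ (n + k) * (-((k : ℝ) + 1) ^ 2 * (n + 1).choose (k + 1) * h₂
    - (k + 1) * (n + k + 2) * (n + k + 1).choose n * h₁
    + (n + 1) * n.choose k * (n + k + 2) * h₃)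

theorem mul_coeff_shiftedLegendrePoly_succ (n k : ℕ) :
    ((n : ℝ) + 1 - k) * (shiftedLegendrePoly (n + 1)).coeff k =
      -((n : ℝ) + k + 1) * (shiftedLegendrePoly n).coeff k := by
  have h₁ := sq_mul_coeff_succ_shiftedLegendrePoly (n + 1) k
  have h₂ := sq_mul_coeff_succ_shiftedLegendrePoly_succ n k
  refine mul_left_cancel₀ (show (n : ℝ) + k + 2 ≠ 0 by positivity) ?_
  push_cast at h₁
  linear_combination h₁ - h₂

theorem coeff_qPoly_zero (n : ℕ) : (qPoly n).coeff 0 = 0 := by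
  simp [qPoly, coeff_X_pow]

theorem coeff_qPoly_succ (n k : ℕ) :
    (qPoly n).coeff (k + 1) = (shiftedLegendrePoly n).coeff k / ((k : ℝ) + 1) := by
  rw [qPoly, finsetSum_coeff]
  simp only [coeff_C_mul, coeff_X_pow, add_left_inj, mul_ite, mul_one, mul_zero]
  rw [sum_ite_eq]
  split_ifs with hk
  · rfl
  · rw [coeff_shiftedLegendrePoly_of_lt (by simpa using hk), zero_div]

theorem natDegree_qPoly_le (n : ℕ) : (qPoly n).natDegree ≤ n + 1 := by
  refine natDegree_le_iff_coeff_eq_zero.2 fun j hj => ?_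
  obtain ⟨k, rfl⟩ : ∃ k, j = k + 1 := ⟨j - 1, by omega⟩
  rw [coeff_qPoly_succ, coeff_shiftedLegendrePoly_of_lt (by omega), zero_div]

theorem coeff_two_X_sub_one_mul_succ (f : ℝ[X]) (k : ℕ) :
    ((2 * X - 1) * f).coeff (k + 1) = 2 * f.coeff k - f.coeff (k + 1) := by
  rw [sub_mul, one_mul, mul_assoc, coeff_sub, coeff_ofNat_mul, coeff_X_mul]

theorem C_mul_qPoly_succ (n : ℕ) :
    C (2 * ((n : ℝ) + 2)) * qPoly (n + 1) =
      (2 * X - 1) * shiftedLegendrePoly (n + 1) - shiftedLegendrePoly n := by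
  ext (_ | k)
  · simp [coeff_qPoly_zero, coeff_shiftedLegendrePoly, pow_succ]
  rw [coeff_C_mul, coeff_sub, coeff_two_X_sub_one_mul_succ, coeff_qPoly_succ]
  have h₁ := sq_mul_coeff_succ_shiftedLegendrePoly (n + 1) k
  have h₂ := sq_mul_coeff_succ_shiftedLegendrePoly n k
  have h₃ := mul_coeff_shiftedLegendrePoly_succ n k
  push_cast at h₁
  field_simp
  refine mul_left_cancel₀ (show (k : ℝ) + 1 ≠ 0 by positivity) ?_
  linear_combination h₁ + h₂ - (n - k) * h₃

theorem C_mul_qPoly (n : ℕ) :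
    C (2 * (n : ℝ)) * qPoly n =
      shiftedLegendrePoly (n + 1) - (2 * X - 1) * shiftedLegendrePoly n := by
  ext (_ | k)
  · simp [coeff_qPoly_zero, coeff_shiftedLegendrePoly, pow_succ]
  rw [coeff_C_mul, coeff_sub, coeff_two_X_sub_one_mul_succ, coeff_qPoly_succ]
  have h₁ := sq_mul_coeff_succ_shiftedLegendrePoly n k
  have h₂ := sq_mul_coeff_succ_shiftedLegendrePoly_succ n k
  field_simp
  refine mul_left_cancel₀ (show (k : ℝ) + 1 ≠ 0 by positivity) ?_
  linear_combination -(h₁ + h₂)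

theorem shiftedLegendrePoly_mul_qPoly_cross (m n : ℕ) :
    C ((n : ℝ) + 2) * (shiftedLegendrePoly (m + 1) * qPoly (n + 1))
        - C ((m : ℝ) + 2) * (shiftedLegendrePoly (n + 1) * qPoly (m + 1)) =
      C (n : ℝ) * (shiftedLegendrePoly m * qPoly n)
        - C (m : ℝ) * (shiftedLegendrePoly n * qPoly m) := by
  have hAm := C_mul_qPoly_succ m
  have hAn := C_mul_qPoly_succ n
  have hBm := C_mul_qPoly m
  have hBn := C_mul_qPoly n
  simp only [map_mul, map_add, map_ofNat, map_natCast] at hAm hAn hBm hBn ⊢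
  refine mul_left_cancel₀ (two_ne_zero : (2 : ℝ[X]) ≠ 0) ?_
  linear_combination shiftedLegendrePoly (m + 1) * hAn - shiftedLegendrePoly (n + 1) * hAm
    - shiftedLegendrePoly m * hBn + shiftedLegendrePoly n * hBm

theorem S_succ_cross (m n r : ℕ) :
    ((n : ℝ) + 2) * S (m + 1) (n + 1) r - ((m : ℝ) + 2) * S (n + 1) (m + 1) r =
      n * S m n r - m * S n m r := by
  simpa only [S, coeff_sub, coeff_C_mul] using
    congrArg (coeff · (r + 1)) (shiftedLegendrePoly_mul_qPoly_cross m n)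

theorem S_eq_zero {m n r : ℕ} (h : m + n < r) : S m n r = 0 := by
  refine coeff_eq_zero_of_natDegree_lt (natDegree_mul_le.trans_lt ?_)
  linarith [natDegree_shiftedLegendrePoly_le m, natDegree_qPoly_le n]

theorem K_eq_sum_range {m n N : ℕ} (h : m + n + 1 ≤ N) :
    K m n = ∑ r ∈ range N, S m n r / ((r : ℝ) + 2) ^ 2 := by
  refine sum_subset (range_subset_range.2 h) fun r _ hr => ?_
  rw [S_eq_zero (by simpa using hr), zero_div]

theorem stmt18 (m n : ℕ) (hm : 1 ≤ m) (hn : 1 ≤ n) :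
    ((n : ℝ) + 1) * K m n - ((m : ℝ) + 1) * K n m =
      ((n : ℝ) - 1) * K (m - 1) (n - 1) - ((m : ℝ) - 1) * K (n - 1) (m - 1) := by
  obtain ⟨m, rfl⟩ := Nat.exists_eq_add_of_le' hm
  obtain ⟨n, rfl⟩ := Nat.exists_eq_add_of_le' hn
  simp only [Nat.add_sub_cancel]
  rw [K_eq_sum_range (N := m + n + 3) (by omega), K_eq_sum_range (N := m + n + 3) (by omega),
    K_eq_sum_range (N := m + n + 3) (by omega), K_eq_sum_range (N := m + n + 3) (by omega),
    mul_sum, mul_sum, mul_sum, mul_sum, ← sum_sub_distrib, ← sum_sub_distrib]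
  refine sum_congr rfl fun r _ => ?_
  push_cast
  linear_combination S_succ_cross m n r / ((r : ℝ) + 2) ^ 2
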